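/- arXiv:1702.05864 — 3 statements merged into one kernel-verified Lean document; each statement's English description precedes it below -/
import Mathlib

section
/- Let p ≥ 2 and b ∈ ℝ with b < 1 - 1/p. There exists a constant C > 0, depending only on p and b, such that for every Lebesgue measurable function f : ℝ → ℝ one has ∫_{1/10}^∞ ( t^{b-1} ∫_1^t |f(s)| ds )^p dt ≤ C ∫_0^∞ ( t^b |f(t)| )^p dt, where for t < 1 the inner integral ∫_1^t |f| is interpreted as the (nonnegative) integral of |f| over the interval between t and 1. -/
/-!
Hardy's argument. For `t > 0`, Hölder's inequality with the weight `s ^ (ε - 1)` on `(0, t]`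
gives `(∫₀ᵗ g) ^ p ≤ (t ^ ε / ε) ^ (p - 1) * ∫₀ᵗ s ^ ((1 - ε) * (p - 1)) * g s ^ p`.
Multiplying by `t ^ ((b - 1) * p)`, integrating over `t > 0` and exchanging the integrals turns
the weight of `g s ^ p` into `s ^ ((1 - ε) * (p - 1)) * ∫ₛ^∞ t ^ ((b - 1) * p + ε * (p - 1)) dt`,
a constant multiple of `s ^ (b * p)` as soon as `(b - 1) * p + ε * (p - 1) < -1`; such an
`ε > 0` exists exactly when `b < 1 - 1 / p`. For `t > 1` the integral over `(1, t]` is at most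
the one over `(0, t]`, and for `t ∈ (1/10, 1]` the integral over `(t, 1]` is at most `∫₀¹ g`,
which the same Hölder bound at `t = 1` controls.
-/

open MeasureTheory Set
open scoped ENNReal

theorem lintegral_rpow_le_of_weight {α : Type*} [MeasurableSpace α]
    {μ : Measure α} {p : ℝ} (hp : 1 < p) {g v : α → ℝ≥0∞} (hg : AEMeasurable g μ)
    (hv : AEMeasurable v μ) (hv0 : ∀ᵐ x ∂μ, v x ≠ 0) (hv_top : ∀ᵐ x ∂μ, v x ≠ ∞) :
    (∫⁻ x, g x ∂μ) ^ p ≤ (∫⁻ x, v x ∂μ) ^ (p - 1) * ∫⁻ x, v x ^ (1 - p) * g x ^ p ∂μ := by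
  have hp0 : p ≠ 0 := by positivity
  have hfactor : ∫⁻ x, g x ∂μ
      = ∫⁻ x, v x ^ (1 - 1 / p) * (v x ^ (1 - p) * g x ^ p) ^ (1 / p) ∂μ := by
    refine lintegral_congr_ae ?_
    filter_upwards [hv0, hv_top] with x hx0 hx_top
    rw [ENNReal.mul_rpow_of_nonneg _ _ (by positivity), ← ENNReal.rpow_mul, ← ENNReal.rpow_mul,
      ← mul_assoc, ← ENNReal.rpow_add _ _ hx0 hx_top, mul_one_div_cancel hp0, ENNReal.rpow_one]
    convert (one_mul (g x)).symm
    convert ENNReal.rpow_zero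
    field_simp
    ring
  have hholder :=
    ENNReal.lintegral_mul_norm_pow_le hv ((hv.pow_const (1 - p)).mul (hg.pow_const p))
    (p := 1 - 1 / p) (q := 1 / p) (by rw [sub_nonneg, div_le_one (by positivity)]; exact hp.le)
    (by positivity) (by ring)
  calc (∫⁻ x, g x ∂μ) ^ p
      ≤ ((∫⁻ x, v x ∂μ) ^ (1 - 1 / p) *
          (∫⁻ x, v x ^ (1 - p) * g x ^ p ∂μ) ^ (1 / p)) ^ p := by
        rw [hfactor]; exact ENNReal.rpow_le_rpow hholder (by positivity)
    _ = (∫⁻ x, v x ∂μ) ^ (p - 1) * ∫⁻ x, v x ^ (1 - p) * g x ^ p ∂μ := by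
        rw [ENNReal.mul_rpow_of_nonneg _ _ (by positivity), ← ENNReal.rpow_mul,
          ← ENNReal.rpow_mul, one_div_mul_cancel hp0, ENNReal.rpow_one, sub_mul, one_mul,
          one_div_mul_cancel hp0]

theorem lintegral_Ioc_zero_rpow {ε t : ℝ} (hε : 0 < ε) (ht : 0 ≤ t) :
    ∫⁻ s in Ioc 0 t, ENNReal.ofReal (s ^ (ε - 1)) = ENNReal.ofReal (t ^ ε / ε) := by
  have hint : IntegrableOn (fun s : ℝ => s ^ (ε - 1)) (Ioc 0 t) :=
    (intervalIntegral.intervalIntegrable_rpow' (by linarith)).1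
  rw [← ofReal_integral_eq_lintegral_ofReal hint
    ((ae_restrict_mem measurableSet_Ioc).mono fun s hs => Real.rpow_nonneg hs.1.le _),
    ← intervalIntegral.integral_of_le ht, integral_rpow (Or.inl (by linarith))]
  simp [Real.zero_rpow hε.ne']

theorem lintegral_Ici_rpow {A s : ℝ} (hA : A < -1) (hs : 0 < s) :
    ∫⁻ t in Ici s, ENNReal.ofReal (t ^ A) = ENNReal.ofReal (s ^ (A + 1) / (-A - 1)) := by
  rw [← setLIntegral_congr Ioi_ae_eq_Ici,
    ← ofReal_integral_eq_lintegral_ofReal (integrableOn_Ioi_rpow_of_lt hA hs)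
      ((ae_restrict_mem measurableSet_Ioi).mono fun t ht =>
        Real.rpow_nonneg (hs.trans ht).le _),
    integral_Ioi_rpow_of_lt hA hs, neg_div, ← div_neg, neg_add']

theorem lintegral_Ioi_mul_lintegral_Ioc_comm (a : ℝ) {φ H : ℝ → ℝ≥0∞} (hφ : Measurable φ)
    (hH : Measurable H) :
    ∫⁻ t in Ioi a, φ t * ∫⁻ s in Ioc a t, H s = ∫⁻ s in Ioi a, H s * ∫⁻ t in Ici s, φ t := by
  have hmeas : Measurable (Function.uncurry fun t s => φ t * (Iic t).indicator H s) := by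
    have hle : MeasurableSet {q : ℝ × ℝ | q.2 ≤ q.1} :=
      measurableSet_le measurable_snd measurable_fst
    exact (hφ.comp measurable_fst).mul ((hH.comp measurable_snd).indicator hle)
  calc ∫⁻ t in Ioi a, φ t * ∫⁻ s in Ioc a t, H s
      = ∫⁻ t in Ioi a, ∫⁻ s in Ioi a, φ t * (Iic t).indicator H s := by
        refine lintegral_congr fun t => ?_
        rw [lintegral_const_mul _ (hH.indicator measurableSet_Iic),
          lintegral_indicator measurableSet_Iic, Measure.restrict_restrict measurableSet_Iic,
          Iic_inter_Ioi]
    _ = ∫⁻ s in Ioi a, ∫⁻ t in Ioi a, φ t * (Iic t).indicator H s :=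
        lintegral_lintegral_swap hmeas.aemeasurable
    _ = ∫⁻ s in Ioi a, H s * ∫⁻ t in Ici s, φ t := by
        refine setLIntegral_congr_fun measurableSet_Ioi fun s hs => ?_
        have hind : ∀ t,
            φ t * (Iic t).indicator H s = (Ici s).indicator (fun t => φ t * H s) t :=
          fun t => by by_cases h : s ≤ t <;> simp [h]
        rw [lintegral_congr hind, lintegral_indicator measurableSet_Ici,
          Measure.restrict_restrict measurableSet_Ici,
          inter_eq_left.2 (Ici_subset_Ioi.2 hs), lintegral_mul_const _ hφ, mul_comm]

theorem lintegral_Ioc_zero_rpow_le {p ε t : ℝ} (hp : 1 < p) (hε : 0 < ε) (ht : 0 ≤ t)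
    {g : ℝ → ℝ≥0∞} (hg : AEMeasurable g) :
    (∫⁻ s in Ioc 0 t, g s) ^ p ≤ ENNReal.ofReal (t ^ ε / ε) ^ (p - 1) *
      ∫⁻ s in Ioc 0 t, ENNReal.ofReal (s ^ ((1 - ε) * (p - 1))) * g s ^ p := by
  have hpos : ∀ᵐ s ∂volume.restrict (Ioc 0 t), 0 < s :=
    (ae_restrict_mem measurableSet_Ioc).mono fun s hs => hs.1
  have h := lintegral_rpow_le_of_weight hp hg.restrict
    (v := fun s => ENNReal.ofReal (s ^ (ε - 1)))
    (measurable_id.pow_const _).ennreal_ofReal.aemeasurable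
    (hpos.mono fun s hs => by simpa using Real.rpow_pos_of_pos hs _)
    (ae_of_all _ fun _ => ENNReal.ofReal_ne_top)
  rw [lintegral_Ioc_zero_rpow hε ht] at h
  refine h.trans_eq (congrArg _ (lintegral_congr_ae ?_))
  filter_upwards [hpos] with s hs
  rw [ENNReal.ofReal_rpow_of_pos (Real.rpow_pos_of_pos hs _), ← Real.rpow_mul hs.le]
  congr 3; ring

theorem rpow_mul_lintegral_Ioc_zero_rpow_le {p b ε t : ℝ} (hp : 1 < p) (hε : 0 < ε)
    (ht : 0 < t) {g : ℝ → ℝ≥0∞} (hg : AEMeasurable g) :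
    (ENNReal.ofReal (t ^ (b - 1)) * ∫⁻ s in Ioc 0 t, g s) ^ p
      ≤ ENNReal.ofReal (ε ^ (1 - p) * t ^ ((b - 1) * p + ε * (p - 1))) *
        ∫⁻ s in Ioc 0 t, ENNReal.ofReal (s ^ ((1 - ε) * (p - 1))) * g s ^ p := by
  have hpow : (t ^ (b - 1)) ^ p * (t ^ ε / ε) ^ (p - 1)
      = ε ^ (1 - p) * t ^ ((b - 1) * p + ε * (p - 1)) := by
    rw [Real.div_rpow (by positivity) hε.le, ← Real.rpow_mul ht.le, ← Real.rpow_mul ht.le,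
      Real.rpow_add ht, show 1 - p = -(p - 1) by ring, Real.rpow_neg hε.le]
    field_simp
  rw [ENNReal.mul_rpow_of_nonneg _ _ (by positivity), ← hpow,
    ENNReal.ofReal_mul (by positivity), mul_assoc,
    ← ENNReal.ofReal_rpow_of_pos (x := t ^ (b - 1)) (by positivity),
    ← ENNReal.ofReal_rpow_of_pos (x := t ^ ε / ε) (by positivity)]
  exact mul_le_mul_right (lintegral_Ioc_zero_rpow_le hp hε ht.le hg) _

theorem lintegral_Ioi_hardy_le {p b ε : ℝ} (hp : 1 < p) (hε : 0 < ε)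
    (hA : (b - 1) * p + ε * (p - 1) < -1) {g : ℝ → ℝ≥0∞} (hg : Measurable g) :
    ∫⁻ t in Ioi 0, (ENNReal.ofReal (t ^ (b - 1)) * ∫⁻ s in Ioc 0 t, g s) ^ p
      ≤ ENNReal.ofReal (ε ^ (1 - p) / (-((b - 1) * p + ε * (p - 1)) - 1)) *
        ∫⁻ t in Ioi 0, ENNReal.ofReal (t ^ (b * p)) * g t ^ p := by
  set A := (b - 1) * p + ε * (p - 1)
  set H := fun s : ℝ => ENNReal.ofReal (s ^ ((1 - ε) * (p - 1))) * g s ^ p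
  have hH : Measurable H := (measurable_id.pow_const _).ennreal_ofReal.mul (hg.pow_const p)
  have hφ : Measurable fun t : ℝ => ENNReal.ofReal (t ^ A) :=
    (measurable_id.pow_const _).ennreal_ofReal
  have htail : ∀ s ∈ Ioi (0 : ℝ), H s * ∫⁻ t in Ici s, ENNReal.ofReal (t ^ A)
      = ENNReal.ofReal (-A - 1)⁻¹ * (ENNReal.ofReal (s ^ (b * p)) * g s ^ p) := by
    intro s (hs : 0 < s)
    have hexp : b * p = (1 - ε) * (p - 1) + (A + 1) := by ring
    rw [lintegral_Ici_rpow hA hs, div_eq_mul_inv, ENNReal.ofReal_mul (Real.rpow_nonneg hs.le _),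
      hexp, Real.rpow_add hs ((1 - ε) * (p - 1)), ENNReal.ofReal_mul (Real.rpow_nonneg hs.le _)]
    ring
  calc ∫⁻ t in Ioi 0, (ENNReal.ofReal (t ^ (b - 1)) * ∫⁻ s in Ioc 0 t, g s) ^ p
      ≤ ∫⁻ t in Ioi 0, ENNReal.ofReal (ε ^ (1 - p)) *
          (ENNReal.ofReal (t ^ A) * ∫⁻ s in Ioc 0 t, H s) :=
        setLIntegral_mono' measurableSet_Ioi fun t ht =>
          (rpow_mul_lintegral_Ioc_zero_rpow_le hp hε ht hg.aemeasurable).trans_eq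
            (by rw [ENNReal.ofReal_mul (by positivity), mul_assoc])
    _ = ENNReal.ofReal (ε ^ (1 - p)) *
          ∫⁻ s in Ioi 0, H s * ∫⁻ t in Ici s, ENNReal.ofReal (t ^ A) := by
        rw [lintegral_const_mul' _ _ ENNReal.ofReal_ne_top,
          lintegral_Ioi_mul_lintegral_Ioc_comm 0 hφ hH]
    _ = ENNReal.ofReal (ε ^ (1 - p) / (-A - 1)) *
          ∫⁻ t in Ioi 0, ENNReal.ofReal (t ^ (b * p)) * g t ^ p := by
        rw [setLIntegral_congr_fun measurableSet_Ioi htail,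
          lintegral_const_mul' _ _ ENNReal.ofReal_ne_top, ← mul_assoc,
          ← ENNReal.ofReal_mul (by positivity), div_eq_mul_inv]

theorem lintegral_Ioc_zero_one_rpow_le {p b ε : ℝ} (hp : 1 < p) (hε : 0 < ε)
    (hbε : b * p ≤ (1 - ε) * (p - 1)) {g : ℝ → ℝ≥0∞} (hg : AEMeasurable g) :
    (∫⁻ s in Ioc 0 1, g s) ^ p
      ≤ ENNReal.ofReal (ε ^ (1 - p)) *
        ∫⁻ s in Ioc 0 1, ENNReal.ofReal (s ^ (b * p)) * g s ^ p := by
  have hconst : ENNReal.ofReal ((1 : ℝ) ^ ε / ε) ^ (p - 1) = ENNReal.ofReal (ε ^ (1 - p)) := by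
    rw [Real.one_rpow, ENNReal.ofReal_rpow_of_pos (by positivity), one_div, Real.inv_rpow hε.le,
      ← Real.rpow_neg hε.le, neg_sub]
  refine (lintegral_Ioc_zero_rpow_le hp hε zero_le_one hg).trans ?_
  rw [hconst]
  refine mul_le_mul_right (setLIntegral_mono' measurableSet_Ioc fun s hs => ?_) _
  gcongr ENNReal.ofReal ?_ * _
  exact Real.rpow_le_rpow_of_exponent_ge hs.1 hs.2 hbε

theorem lintegral_Ioc_rpow_mul_lintegral_uIoc_le {p b a : ℝ} (hp : 0 ≤ p) (hb : b ≤ 1)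
    (ha : 0 < a) (g : ℝ → ℝ≥0∞) :
    ∫⁻ t in Ioc a 1, (ENNReal.ofReal (t ^ (b - 1)) * ∫⁻ s in uIoc 1 t, g s) ^ p
      ≤ ENNReal.ofReal (a ^ ((b - 1) * p)) * (∫⁻ s in Ioc 0 1, g s) ^ p := by
  calc ∫⁻ t in Ioc a 1, (ENNReal.ofReal (t ^ (b - 1)) * ∫⁻ s in uIoc 1 t, g s) ^ p
      ≤ ∫⁻ _ in Ioc a 1,
          ENNReal.ofReal (a ^ ((b - 1) * p)) * (∫⁻ s in Ioc 0 1, g s) ^ p := by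
        refine setLIntegral_mono' measurableSet_Ioc fun t ht => ?_
        have ht0 : 0 < t := ha.trans ht.1
        rw [ENNReal.mul_rpow_of_nonneg _ _ hp, ENNReal.ofReal_rpow_of_pos (by positivity),
          ← Real.rpow_mul ht0.le, uIoc_of_ge ht.2]
        exact mul_le_mul' (ENNReal.ofReal_le_ofReal (Real.rpow_le_rpow_of_nonpos ha ht.1.le
          (mul_nonpos_of_nonpos_of_nonneg (by linarith) hp)))
          (ENNReal.rpow_le_rpow (lintegral_mono_set (Ioc_subset_Ioc_left ht0.le)) hp)
    _ ≤ ENNReal.ofReal (a ^ ((b - 1) * p)) * (∫⁻ s in Ioc 0 1, g s) ^ p := by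
        rw [setLIntegral_const, Real.volume_Ioc]
        exact mul_le_of_le_one_right' (ENNReal.ofReal_le_one.2 (by linarith))

theorem exists_lintegral_Ioi_rpow_mul_lintegral_uIoc_le {p b a : ℝ} (hp : 1 < p)
    (hb : b < 1 - 1 / p) (ha : 0 < a) :
    ∃ C : ℝ, 0 < C ∧ ∀ g : ℝ → ℝ≥0∞, Measurable g →
      ∫⁻ t in Ioi a, (ENNReal.ofReal (t ^ (b - 1)) * ∫⁻ s in uIoc 1 t, g s) ^ p
        ≤ ENNReal.ofReal C * ∫⁻ t in Ioi 0, ENNReal.ofReal (t ^ (b * p)) * g t ^ p := by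
  have hbp : (b - 1) * p < -1 := by
    have h := mul_lt_mul_of_pos_right hb (by linarith : 0 < p)
    rw [sub_mul, one_div_mul_cancel (by positivity)] at h
    linarith
  -- `ε * (p - 1)` is half the gap `-1 - (b - 1) * p`, which leaves room in both `hA` and `hbε`.
  set ε := (-1 - (b - 1) * p) / (2 * (p - 1))
  have hε : 0 < ε := div_pos (by linarith) (by linarith)
  have hεp : ε * (p - 1) = (-1 - (b - 1) * p) / 2 := by
    simp only [ε]; field_simp [(by linarith : p - 1 ≠ 0)]
  have hA : (b - 1) * p + ε * (p - 1) < -1 := by linarith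
  have hbε : b * p ≤ (1 - ε) * (p - 1) := by linarith
  have hC₁ : 0 < a ^ ((b - 1) * p) * ε ^ (1 - p) := by positivity
  have hC₂ : 0 < ε ^ (1 - p) / (-((b - 1) * p + ε * (p - 1)) - 1) :=
    div_pos (by positivity) (by linarith)
  refine ⟨_, add_pos hC₁ hC₂, fun g hg => ?_⟩
  set R := ∫⁻ t in Ioi 0, ENNReal.ofReal (t ^ (b * p)) * g t ^ p
  have hsplit : Ioi a ⊆ Ioc a 1 ∪ Ioi 1 := fun t ht => by
    rcases le_or_gt t 1 with h | h
    exacts [Or.inl ⟨ht, h⟩, Or.inr h]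
  have hnear : ∫⁻ t in Ioc a 1, (ENNReal.ofReal (t ^ (b - 1)) * ∫⁻ s in uIoc 1 t, g s) ^ p
      ≤ ENNReal.ofReal (a ^ ((b - 1) * p) * ε ^ (1 - p)) * R := by
    refine (lintegral_Ioc_rpow_mul_lintegral_uIoc_le (by linarith)
      (by linarith [(by positivity : 0 < 1 / p)]) ha g).trans ?_
    rw [ENNReal.ofReal_mul (by positivity), mul_assoc]
    refine mul_le_mul_right
      ((lintegral_Ioc_zero_one_rpow_le hp hε hbε hg.aemeasurable).trans ?_) _
    exact mul_le_mul_right (lintegral_mono_set Ioc_subset_Ioi_self) _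
  have hfar : ∫⁻ t in Ioi 1, (ENNReal.ofReal (t ^ (b - 1)) * ∫⁻ s in uIoc 1 t, g s) ^ p
      ≤ ENNReal.ofReal (ε ^ (1 - p) / (-((b - 1) * p + ε * (p - 1)) - 1)) * R := by
    refine le_trans ?_ (lintegral_Ioi_hardy_le hp hε hA hg)
    refine (setLIntegral_mono' measurableSet_Ioi fun t (ht : 1 < t) => ?_).trans
      (lintegral_mono_set (Ioi_subset_Ioi zero_le_one))
    rw [uIoc_of_le ht.le]
    exact ENNReal.rpow_le_rpow
      (mul_le_mul_right (lintegral_mono_set (Ioc_subset_Ioc_left zero_le_one)) _) (by linarith)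
  calc ∫⁻ t in Ioi a, (ENNReal.ofReal (t ^ (b - 1)) * ∫⁻ s in uIoc 1 t, g s) ^ p
      ≤ _ := (lintegral_mono_set hsplit).trans (lintegral_union_le _ _ _)
    _ ≤ _ := add_le_add hnear hfar
    _ = _ := by rw [← add_mul, ← ENNReal.ofReal_add hC₁.le hC₂.le]

/-- Hardy's inequality, polynomial weights, case `b < 1 - 1/p`.
For `t < 1` the inner integral `∫_1^t |f|` is interpreted as the nonnegative
integral of `|f|` over the interval between `t` and `1` (here `uIoc 1 t`). -/
theorem hardy_polynomial_lower (p b : ℝ) (hp : 2 ≤ p) (hb : b < 1 - 1 / p) :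
    ∃ C : ℝ, 0 < C ∧ ∀ f : ℝ → ℝ, Measurable f →
      (∫⁻ t in Ioi (1 / 10 : ℝ),
          (ENNReal.ofReal (t ^ (b - 1)) * ∫⁻ s in uIoc (1 : ℝ) t, ENNReal.ofReal |f s|) ^ p)
        ≤ ENNReal.ofReal C *
          ∫⁻ t in Ioi (0 : ℝ), (ENNReal.ofReal (t ^ b * |f t|)) ^ p := by
  obtain ⟨C, hC, hle⟩ := exists_lintegral_Ioi_rpow_mul_lintegral_uIoc_le (by linarith) hb
    (by norm_num : (0 : ℝ) < 1 / 10)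
  refine ⟨C, hC, fun f hf => (hle _ hf.abs.ennreal_ofReal).trans_eq ?_⟩
  congr 1
  refine setLIntegral_congr_fun measurableSet_Ioi fun t (ht : 0 < t) => ?_
  rw [ENNReal.ofReal_mul (by positivity), ENNReal.mul_rpow_of_nonneg _ _ (by positivity),
    ENNReal.ofReal_rpow_of_pos (x := t ^ b) (by positivity), ← Real.rpow_mul ht.le]
end

section
/- Let p ≥ 2, b ∈ ℝ, ϑ ≥ 0, and μ₀ > 0. There exists a constant C > 0, depending only on μ₀, p, b, and ϑ, such that for every μ ≤ -μ₀ and every Lebesgue measurable f : ℝ → ℝ one has |μ|^{p(1+ϑ)} ∫_{1/10}^∞ ( e^{μ t} t^b ∫_1^t e^{-μ s} |f(s)| (t-s)^ϑ ds )^p dt ≤ C ∫_0^∞ ( |f(t)| t^b )^p dt, where for t < 1 the inner integral is interpreted as 0. -/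
/-!
Write `u = t - s`. For `s ≥ 1` we have `(t / s) ^ b ≤ (1 + u) ^ |b|`, and half of the decay
`exp (-|μ| u)` absorbs this polynomial factor uniformly in `μ ≤ -μ₀`. The left-hand side is then
dominated by the convolution of `|f s| s ^ b` with the kernel `C u ^ ϑ exp (-|μ| u / 2)`, so
Young's inequality `‖k ⋆ g‖_p ≤ ‖k‖₁ ‖g‖_p` applies. Since
`‖k‖₁ = C Γ(ϑ + 1) (2 / |μ|) ^ (ϑ + 1)`, the factor `|μ| ^ (p (1 + ϑ))` cancels the dependence
on `μ`.
-/

open MeasureTheory Set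
open scoped ENNReal

/-- Jensen's inequality for the measure `w • ρ`, obtained by comparing the `L¹` and `Lᵖ` norms
on `ρ.withDensity w`. -/
theorem rpow_lintegral_mul_le {α : Type*} [MeasurableSpace α] {ρ : Measure α} {p : ℝ}
    (hp : 1 ≤ p) {w g : α → ℝ≥0∞} (hw : Measurable w) (hg : Measurable g) :
    (∫⁻ x, w x * g x ∂ρ) ^ p ≤ (∫⁻ x, w x ∂ρ) ^ (p - 1) * ∫⁻ x, w x * g x ^ p ∂ρ := by
  have h := eLpNorm'_le_eLpNorm'_mul_rpow_measure_univ (μ := ρ.withDensity w) zero_lt_one hp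
    hg.aestronglyMeasurable
  simp only [eLpNorm'_eq_lintegral_enorm, enorm_eq_self, ENNReal.rpow_one, div_one,
    withDensity_apply _ MeasurableSet.univ, Measure.restrict_univ,
    lintegral_withDensity_eq_lintegral_mul _ hw hg,
    lintegral_withDensity_eq_lintegral_mul _ hw (hg.pow_const p), Pi.mul_apply] at h
  have hp0 : 0 ≤ p := by linarith
  calc (∫⁻ x, w x * g x ∂ρ) ^ p
      ≤ ((∫⁻ x, w x * g x ^ p ∂ρ) ^ (1 / p) * (∫⁻ x, w x ∂ρ) ^ (1 - 1 / p)) ^ p :=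
        ENNReal.rpow_le_rpow h hp0
    _ = (∫⁻ x, w x ∂ρ) ^ (p - 1) * ∫⁻ x, w x * g x ^ p ∂ρ := by
        rw [ENNReal.mul_rpow_of_nonneg _ _ hp0, ← ENNReal.rpow_mul, ← ENNReal.rpow_mul,
          one_div_mul_cancel (by linarith), ENNReal.rpow_one, sub_mul,
          one_div_mul_cancel (by linarith), one_mul, mul_comm]

theorem lintegral_rpow_convolution_le {G : Type*} [AddGroup G] [MeasurableSpace G]
    [MeasurableAdd₂ G] [MeasurableNeg G] {μ : Measure G} [SFinite μ] [μ.IsAddRightInvariant]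
    {p : ℝ} (hp : 1 ≤ p) {k g : G → ℝ≥0∞} (hk : Measurable k) (hg : Measurable g) :
    ∫⁻ t, (∫⁻ s, k s * g (t - s) ∂μ) ^ p ∂μ ≤ (∫⁻ s, k s ∂μ) ^ p * ∫⁻ t, g t ^ p ∂μ := by
  have hgp : Measurable fun x => g x ^ p := hg.pow_const p
  have hprod : Measurable fun z : G × G => k z.2 * g (z.1 - z.2) ^ p :=
    (hk.comp measurable_snd).mul (hgp.comp (measurable_fst.sub measurable_snd))
  calc ∫⁻ t, (∫⁻ s, k s * g (t - s) ∂μ) ^ p ∂μ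
      ≤ ∫⁻ t, (∫⁻ s, k s ∂μ) ^ (p - 1) * ∫⁻ s, k s * g (t - s) ^ p ∂μ ∂μ :=
        lintegral_mono fun t =>
          rpow_lintegral_mul_le hp hk (hg.comp (measurable_const.sub measurable_id))
    _ = (∫⁻ s, k s ∂μ) ^ (p - 1) * ∫⁻ s, k s * ∫⁻ t, g (t - s) ^ p ∂μ ∂μ := by
        rw [lintegral_const_mul _ hprod.lintegral_prod_right',
          lintegral_lintegral_swap hprod.aemeasurable]
        congr 1
        exact lintegral_congr fun s => lintegral_const_mul (k s)
          (hgp.comp (measurable_id.sub measurable_const) : Measurable fun t => g (t - s) ^ p)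
    _ = (∫⁻ s, k s ∂μ) ^ (p - 1) * ((∫⁻ s, k s ∂μ) * ∫⁻ t, g t ^ p ∂μ) := by
        simp_rw [lintegral_sub_right_eq_self (fun t => g t ^ p), lintegral_mul_const _ hk]
    _ = (∫⁻ s, k s ∂μ) ^ p * ∫⁻ t, g t ^ p ∂μ := by
        rw [← mul_assoc]
        nth_rw 2 [← ENNReal.rpow_one (∫⁻ s, k s ∂μ)]
        rw [← ENNReal.rpow_add_of_nonneg _ _ (by linarith) zero_le_one, sub_add_cancel]

theorem exists_one_add_rpow_le_mul_exp {a ε : ℝ} (ha : 0 ≤ a) (hε : 0 < ε) :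
    ∃ C, 0 < C ∧ ∀ u, 0 ≤ u → (1 + u) ^ a ≤ C * Real.exp (ε * u) := by
  set l := ε / (a + 1) with hl
  have hl0 : 0 < l := by positivity
  have hal : a * l ≤ ε := by
    rw [hl, mul_div_assoc', div_le_iff₀ (by linarith)]; nlinarith
  refine ⟨l⁻¹ ^ a * Real.exp (a * l), by positivity, fun u hu => ?_⟩
  have hlin : 1 + u ≤ l⁻¹ * Real.exp (l * (1 + u)) := by
    rw [le_inv_mul_iff₀ hl0]
    linarith [Real.add_one_le_exp (l * (1 + u))]
  calc (1 + u) ^ a ≤ (l⁻¹ * Real.exp (l * (1 + u))) ^ a :=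
        Real.rpow_le_rpow (by linarith) hlin ha
    _ = l⁻¹ ^ a * Real.exp (a * l) * Real.exp (a * l * u) := by
        rw [Real.mul_rpow (by positivity) (by positivity), ← Real.exp_mul, mul_assoc (l⁻¹ ^ a),
          ← Real.exp_add]
        ring_nf
    _ ≤ l⁻¹ ^ a * Real.exp (a * l) * Real.exp (ε * u) := by gcongr

theorem rpow_le_one_add_sub_rpow_abs_mul_rpow (b : ℝ) {s t : ℝ} (hs : 1 ≤ s) (hst : s ≤ t) :
    t ^ b ≤ (1 + (t - s)) ^ |b| * s ^ b := by
  have hs0 : 0 < s := by linarith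
  rcases le_or_gt 0 b with hb | hb
  · have hts : t ≤ (1 + (t - s)) * s := by nlinarith
    calc t ^ b ≤ ((1 + (t - s)) * s) ^ b := Real.rpow_le_rpow (by linarith) hts hb
      _ = (1 + (t - s)) ^ |b| * s ^ b := by
        rw [Real.mul_rpow (by linarith) hs0.le, abs_of_nonneg hb]
  · calc t ^ b ≤ s ^ b := Real.rpow_le_rpow_of_nonpos hs0 hst hb.le
      _ ≤ (1 + (t - s)) ^ |b| * s ^ b :=
        le_mul_of_one_le_left (by positivity) (Real.one_le_rpow (by linarith) (abs_nonneg b))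

theorem exists_exp_mul_rpow_le {μ₀ : ℝ} (b : ℝ) (hμ₀ : 0 < μ₀) :
    ∃ C, 0 < C ∧ ∀ μ, μ ≤ -μ₀ → ∀ s t, 1 ≤ s → s ≤ t →
      Real.exp (μ * (t - s)) * t ^ b ≤ C * Real.exp (-(|μ| / 2 * (t - s))) * s ^ b := by
  obtain ⟨C, hC, hgrowth⟩ := exists_one_add_rpow_le_mul_exp (abs_nonneg b) (half_pos hμ₀)
  refine ⟨C, hC, fun μ hμ s t hs hst => ?_⟩
  have hu : 0 ≤ t - s := by linarith
  have hdecay : Real.exp (μ * (t - s)) * Real.exp (μ₀ / 2 * (t - s))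
      ≤ Real.exp (-(|μ| / 2 * (t - s))) := by
    rw [← Real.exp_add, abs_of_neg (by linarith)]
    gcongr
    nlinarith
  calc Real.exp (μ * (t - s)) * t ^ b
      ≤ Real.exp (μ * (t - s)) * (C * Real.exp (μ₀ / 2 * (t - s)) * s ^ b) := by
        gcongr
        exact (rpow_le_one_add_sub_rpow_abs_mul_rpow b hs hst).trans
          (by gcongr; exact hgrowth _ hu)
    _ = C * (Real.exp (μ * (t - s)) * Real.exp (μ₀ / 2 * (t - s))) * s ^ b := by ring
    _ ≤ C * Real.exp (-(|μ| / 2 * (t - s))) * s ^ b := by gcongr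

noncomputable def gammaKernel (C c ϑ : ℝ) : ℝ → ℝ≥0∞ :=
  (Ici 0).indicator fun u => ENNReal.ofReal (C * (u ^ ϑ * Real.exp (-(c * u))))

theorem measurable_gammaKernel (C c ϑ : ℝ) : Measurable (gammaKernel C c ϑ) :=
  Measurable.indicator (by fun_prop) measurableSet_Ici

theorem lintegral_gammaKernel {C c ϑ : ℝ} (hC : 0 ≤ C) (hc : 0 < c) (hϑ : -1 < ϑ) :
    ∫⁻ u, gammaKernel C c ϑ u
      = ENNReal.ofReal (C * ((1 / c) ^ (ϑ + 1) * Real.Gamma (ϑ + 1))) := by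
  have hΓ := Real.integral_rpow_mul_exp_neg_mul_Ioi (a := ϑ + 1) (by linarith) hc
  rw [add_sub_cancel_right] at hΓ
  have hΓpos : 0 < Real.Gamma (ϑ + 1) := Real.Gamma_pos_of_pos (by linarith)
  have hint : IntegrableOn (fun u : ℝ => u ^ ϑ * Real.exp (-(c * u))) (Ioi 0) :=
    .of_integral_ne_zero (by rw [hΓ]; positivity)
  rw [gammaKernel, lintegral_indicator measurableSet_Ici, ← restrict_Ioi_eq_restrict_Ici,
    ← hΓ, ← integral_const_mul, ofReal_integral_eq_lintegral_ofReal (hint.const_mul C)]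
  filter_upwards [self_mem_ae_restrict measurableSet_Ioi] with u (hu : 0 < u)
  positivity

theorem abs_rpow_mul_lintegral_gammaKernel_rpow {C μ ϑ p : ℝ} (hC : 0 ≤ C) (hμ : μ ≠ 0)
    (hϑ : -1 < ϑ) (hp : 0 ≤ p) :
    ENNReal.ofReal (|μ| ^ (p * (1 + ϑ))) * (∫⁻ u, gammaKernel C (|μ| / 2) ϑ u) ^ p
      = ENNReal.ofReal ((C * 2 ^ (ϑ + 1) * Real.Gamma (ϑ + 1)) ^ p) := by
  have hμpos : 0 < |μ| := abs_pos.2 hμ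
  have hΓ : 0 < Real.Gamma (ϑ + 1) := Real.Gamma_pos_of_pos (by linarith)
  rw [lintegral_gammaKernel hC (by positivity) hϑ, ENNReal.ofReal_rpow_of_nonneg (by positivity) hp,
    ← ENNReal.ofReal_mul (by positivity), mul_comm p, add_comm 1 ϑ, Real.rpow_mul hμpos.le,
    ← Real.mul_rpow (by positivity) (by positivity), one_div_div,
    Real.div_rpow zero_le_two hμpos.le]
  congr 2
  field_simp

theorem mul_lintegral_Ioc_le_lintegral_gammaKernel_mul {μ C c b ϑ : ℝ} {f : ℝ → ℝ}
    (hweight : ∀ s t, 1 ≤ s → s ≤ t →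
      Real.exp (μ * (t - s)) * t ^ b ≤ C * Real.exp (-(c * (t - s))) * s ^ b) (t : ℝ) :
    ENNReal.ofReal (Real.exp (μ * t) * t ^ b) *
        ∫⁻ s in Ioc (1 : ℝ) t, ENNReal.ofReal (Real.exp (-μ * s) * |f s| * (t - s) ^ ϑ)
      ≤ ∫⁻ u, gammaKernel C c ϑ u *
          (Ioi 1).indicator (fun s => ENNReal.ofReal (|f s| * s ^ b)) (t - u) := by
  rw [← lintegral_const_mul' _ _ ENNReal.ofReal_ne_top]
  conv_rhs => rw [← lintegral_sub_left_eq_self _ t]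
  refine (setLIntegral_mono' measurableSet_Ioc fun s ⟨hs, hst⟩ => ?_).trans
    (setLIntegral_le_lintegral _ _)
  have ht0 : 0 < t := by linarith
  have hts : 0 ≤ (t - s) ^ ϑ := Real.rpow_nonneg (sub_nonneg.2 hst) ϑ
  rw [sub_sub_cancel, gammaKernel, indicator_of_mem (show t - s ∈ Ici 0 from sub_nonneg.2 hst),
    indicator_of_mem (show s ∈ Ioi 1 from hs), ← ENNReal.ofReal_mul (by positivity),
    ← ENNReal.ofReal_mul' (by positivity)]
  refine ENNReal.ofReal_le_ofReal ?_
  calc Real.exp (μ * t) * t ^ b * (Real.exp (-μ * s) * |f s| * (t - s) ^ ϑ)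
      = Real.exp (μ * (t - s)) * t ^ b * (|f s| * (t - s) ^ ϑ) := by
        rw [mul_sub, Real.exp_sub, neg_mul, Real.exp_neg]; field_simp
    _ ≤ C * Real.exp (-(c * (t - s))) * s ^ b * (|f s| * (t - s) ^ ϑ) :=
        mul_le_mul_of_nonneg_right (hweight s t hs.le hst) (by positivity)
    _ = C * ((t - s) ^ ϑ * Real.exp (-(c * (t - s)))) * (|f s| * s ^ b) := by ring

/-- Hardy-type inequality with exponential weights, case `μ < 0`.
For `t < 1` the inner integral is interpreted as `0` (the set `Ioc 1 t` is then empty). -/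
theorem hardy_exponential_neg (p b ϑ μ₀ : ℝ) (hp : 2 ≤ p) (hϑ : 0 ≤ ϑ) (hμ₀ : 0 < μ₀) :
    ∃ C : ℝ, 0 < C ∧ ∀ μ : ℝ, μ ≤ -μ₀ → ∀ f : ℝ → ℝ, Measurable f →
      ENNReal.ofReal (|μ| ^ (p * (1 + ϑ))) *
        (∫⁻ t in Ioi (1 / 10 : ℝ),
          (ENNReal.ofReal (Real.exp (μ * t) * t ^ b) *
            ∫⁻ s in Ioc (1 : ℝ) t,
              ENNReal.ofReal (Real.exp (-μ * s) * |f s| * (t - s) ^ ϑ)) ^ p)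
        ≤ ENNReal.ofReal C *
          ∫⁻ t in Ioi (0 : ℝ), (ENNReal.ofReal (|f t| * t ^ b)) ^ p := by
  obtain ⟨C, hC, hweight⟩ := exists_exp_mul_rpow_le b hμ₀
  have hΓ : 0 < Real.Gamma (ϑ + 1) := Real.Gamma_pos_of_pos (by linarith)
  refine ⟨(C * 2 ^ (ϑ + 1) * Real.Gamma (ϑ + 1)) ^ p, by positivity, fun μ hμ f hf => ?_⟩
  have hp0 : 0 < p := by linarith
  set g := (Ioi (1 : ℝ)).indicator fun s => ENNReal.ofReal (|f s| * s ^ b)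
  have hg : Measurable g := Measurable.indicator (by fun_prop) measurableSet_Ioi
  have hgp : ∫⁻ t, g t ^ p ≤ ∫⁻ t in Ioi 0, ENNReal.ofReal (|f t| * t ^ b) ^ p := by
    calc ∫⁻ t, g t ^ p
        = ∫⁻ t, (Ioi 1).indicator (fun s => ENNReal.ofReal (|f s| * s ^ b) ^ p) t :=
          lintegral_congr fun t => (congrFun (indicator_comp_of_zero
            (g := fun x : ℝ≥0∞ => x ^ p) (ENNReal.zero_rpow_of_pos hp0)) t).symm
      _ ≤ _ := by
          rw [lintegral_indicator measurableSet_Ioi]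
          exact lintegral_mono_set (Ioi_subset_Ioi zero_le_one)
  calc _ ≤ ENNReal.ofReal (|μ| ^ (p * (1 + ϑ))) *
        ∫⁻ t, (∫⁻ u, gammaKernel C (|μ| / 2) ϑ u * g (t - u)) ^ p := by
        gcongr _ * ?_
        exact (setLIntegral_le_lintegral _ _).trans (lintegral_mono fun t => ENNReal.rpow_le_rpow
          (mul_lintegral_Ioc_le_lintegral_gammaKernel_mul (hweight μ hμ) t) hp0.le)
    _ ≤ ENNReal.ofReal (|μ| ^ (p * (1 + ϑ))) *
        ((∫⁻ u, gammaKernel C (|μ| / 2) ϑ u) ^ p * ∫⁻ t, g t ^ p) := by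
        gcongr
        exact lintegral_rpow_convolution_le (by linarith) (measurable_gammaKernel _ _ _) hg
    _ ≤ _ := by
        rw [← mul_assoc, abs_rpow_mul_lintegral_gammaKernel_rpow hC.le (by linarith)
          (by linarith) hp0.le]
        gcongr
end

section
/- Let λ₀ > 0 and γ ∈ ℝ. There exists a constant C > 0, depending only on λ₀ and γ, such that for every λ ≥ λ₀ and every continuous f : ℝ → ℝ with compact support contained in (1, ∞), the function u(t) := -e^{λ t} ∫_t^∞ e^{-λ s} f(s) ds is differentiable on ℝ and satisfies u'(t) - λ u(t) = f(t) for all t ∈ ℝ, together with the weighted estimates λ² ∫_1^∞ u(t)² t^{2γ} dt ≤ C ∫_1^∞ f(t)² t^{2γ} dt and ∫_1^∞ u'(t)² t^{2γ} dt ≤ C ∫_1^∞ f(t)² t^{2γ} dt. -/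
/-!
For `λ > 0` the solution is `u(t) = -∫_t^∞ e^{λ(t-s)} f(s) ds`. Cauchy–Schwarz against the kernel
`e^{λ(t-s)}`, whose mass on `(t, ∞)` is `1/λ`, gives `λ u(t)² ≤ ∫_t^∞ e^{λ(t-s)} f(s)² ds`.
Integrating this against `t^{2γ}` over `t > 1` and exchanging the order of integration reduces the
first estimate to `λ ∫_1^s t^{2γ} e^{λ(t-s)} dt ≤ K s^{2γ}` uniformly in `λ ≥ λ₀`. For
`1 ≤ t ≤ s` we have `s/t ≤ 1 + (s - t)`, so the weight varies only polynomially in `s - t`, and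
that growth is absorbed by half of the exponential decay. The estimate for `u' = λu + f` then
follows from `(λu + f)² ≤ 2λ²u² + 2f²`.
-/

open MeasureTheory Set Real Function
open scoped ENNReal

theorem sq_integral_mul_le_integral_mul_integral_mul_sq {α : Type*} [MeasurableSpace α]
    {μ : Measure α} {k f : α → ℝ} (hk0 : 0 ≤ᵐ[μ] k) (hk : Integrable k μ)
    (hkf : Integrable (fun x => k x * f x) μ) (hkf2 : Integrable (fun x => k x * f x ^ 2) μ) :
    (∫ x, k x * f x ∂μ) ^ 2 ≤ (∫ x, k x ∂μ) * ∫ x, k x * f x ^ 2 ∂μ := by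
  have hquad : ∀ c : ℝ, 0 ≤ (∫ x, k x ∂μ) * (c * c) + (2 * ∫ x, k x * f x ∂μ) * c
      + ∫ x, k x * f x ^ 2 ∂μ := by
    intro c
    have hint : ∫ x, k x * (f x + c) ^ 2 ∂μ
        = ∫ x, k x * f x ^ 2 ∂μ + 2 * c * ∫ x, k x * f x ∂μ + c ^ 2 * ∫ x, k x ∂μ := by
      rw [← integral_const_mul, ← integral_const_mul, ← integral_add hkf2 (hkf.const_mul _),
        ← integral_add (f := fun x => k x * f x ^ 2 + 2 * c * (k x * f x))
          (hkf2.add (hkf.const_mul _)) (hk.const_mul _)]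
      congr 1 with x
      ring
    have hnonneg : 0 ≤ ∫ x, k x * (f x + c) ^ 2 ∂μ :=
      integral_nonneg_of_ae (hk0.mono fun x hx => mul_nonneg hx (sq_nonneg _))
    linarith
  have hdiscrim := discrim_le_zero hquad
  rw [discrim] at hdiscrim
  linarith

theorem integrable_and_integral_le_of_lintegral_ofReal_le {α : Type*} [MeasurableSpace α]
    {μ : Measure α} {φ ψ : α → ℝ} (hφ : 0 ≤ᵐ[μ] φ) (hφm : AEStronglyMeasurable φ μ)
    (hψ : 0 ≤ᵐ[μ] ψ) (hψi : Integrable ψ μ)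
    (h : ∫⁻ x, ENNReal.ofReal (φ x) ∂μ ≤ ∫⁻ x, ENNReal.ofReal (ψ x) ∂μ) :
    Integrable φ μ ∧ ∫ x, φ x ∂μ ≤ ∫ x, ψ x ∂μ := by
  refine ⟨⟨hφm, (hasFiniteIntegral_iff_ofReal hφ).2 (h.trans_lt hψi.lintegral_lt_top)⟩, ?_⟩
  rw [integral_eq_lintegral_of_nonneg_ae hφ hφm, integral_eq_lintegral_of_nonneg_ae hψ hψi.1]
  exact ENNReal.toReal_mono hψi.lintegral_lt_top.ne h

theorem integral_add_sq_mul_le {α : Type*} [MeasurableSpace α] {μ : Measure α}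
    {g h w : α → ℝ} (hw : 0 ≤ᵐ[μ] w) (hg : Integrable (fun x => g x ^ 2 * w x) μ)
    (hh : Integrable (fun x => h x ^ 2 * w x) μ) :
    ∫ x, (g x + h x) ^ 2 * w x ∂μ ≤ 2 * ∫ x, g x ^ 2 * w x ∂μ + 2 * ∫ x, h x ^ 2 * w x ∂μ := by
  rw [← integral_const_mul, ← integral_const_mul, ← integral_add (hg.const_mul _) (hh.const_mul _)]
  refine integral_mono_of_nonneg (hw.mono fun x hx => mul_nonneg (sq_nonneg _) hx)
    ((hg.const_mul _).add (hh.const_mul _)) (hw.mono fun x hx => ?_)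
  nlinarith [mul_le_mul_of_nonneg_right (add_sq_le (a := g x) (b := h x)) hx]

theorem lintegral_Ioi_lintegral_Ioi_swap {a : ℝ} {F : ℝ → ℝ → ℝ≥0∞}
    (hF : Measurable (uncurry F)) :
    ∫⁻ t in Ioi a, ∫⁻ s in Ioi t, F t s = ∫⁻ s in Ioi a, ∫⁻ t in Ioo a s, F t s := by
  set S : Set (ℝ × ℝ) := {p | a < p.1 ∧ p.1 < p.2}
  have hS : MeasurableSet S :=
    (measurableSet_lt measurable_const measurable_fst).inter
      (measurableSet_lt measurable_fst measurable_snd)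
  have hleft : ∀ t, (Ioi a).indicator (fun t => ∫⁻ s in Ioi t, F t s) t
      = ∫⁻ s, S.indicator (uncurry F) (t, s) := by
    intro t
    by_cases ht : a < t
    · rw [indicator_of_mem (show t ∈ Ioi a from ht), ← lintegral_indicator measurableSet_Ioi]
      congr 1 with s
      by_cases hs : t < s <;> simp [S, indicator, ht, hs]
    · simp [S, indicator, ht]
  have hright : ∀ s, (Ioi a).indicator (fun s => ∫⁻ t in Ioo a s, F t s) s
      = ∫⁻ t, S.indicator (uncurry F) (t, s) := by
    intro s
    by_cases hs : a < s
    · rw [indicator_of_mem (show s ∈ Ioi a from hs), ← lintegral_indicator measurableSet_Ioo]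
      rfl
    · have hzero : ∀ t, S.indicator (uncurry F) (t, s) = 0 := fun t =>
        indicator_of_notMem (fun h => hs (h.1.trans h.2)) _
      rw [indicator_of_notMem (show s ∉ Ioi a from hs)]
      simp only [hzero, lintegral_zero]
  rw [← lintegral_indicator measurableSet_Ioi, ← lintegral_indicator measurableSet_Ioi]
  simp_rw [hleft, hright]
  exact lintegral_lintegral_swap ((hF.indicator hS).comp measurable_id).aemeasurable

theorem hasDerivAt_integral_Ioi {g : ℝ → ℝ} (hg : Continuous g) (hgi : Integrable g) (t : ℝ) :
    HasDerivAt (fun x => ∫ s in Ioi x, g s) (-g t) t := by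
  have hsplit : (fun x => ∫ s in Ioi x, g s) = fun x => (∫ s in Ioi 0, g s) - ∫ s in 0..x, g s :=
    funext fun x => eq_sub_of_add_eq'
      (intervalIntegral.integral_interval_add_Ioi hgi.integrableOn hgi.integrableOn)
  rw [hsplit]
  exact (hg.integral_hasStrictDerivAt 0 t).hasDerivAt.const_sub _

theorem integrable_exp_mul_mul {g : ℝ → ℝ} (hg : Continuous g) (hgs : HasCompactSupport g)
    (c : ℝ) : Integrable fun s => exp (c * s) * g s :=
  (by fun_prop : Continuous _).integrable_of_hasCompactSupport hgs.mul_left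

theorem integrable_sq_mul_rpow {f : ℝ → ℝ} (hf : Continuous f) (hfs : HasCompactSupport f)
    (h0 : (0 : ℝ) ∉ tsupport f) (a : ℝ) : Integrable fun t => f t ^ 2 * t ^ a := by
  refine integrableOn_univ.1 (IntegrableOn.of_forall_sdiff_eq_zero ?_ MeasurableSet.univ
    fun t ht => by rw [image_eq_zero_of_notMem_tsupport (f := f) ht.2]; ring)
  exact ContinuousOn.integrableOn_compact hfs ((hf.pow 2).continuousOn.mul
    (continuousOn_id.rpow_const fun t ht => Or.inl (ne_of_mem_of_not_mem ht h0)))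

noncomputable def decayingSolution (l : ℝ) (f : ℝ → ℝ) (t : ℝ) : ℝ :=
  -(exp (l * t) * ∫ s in Ioi t, exp (-l * s) * f s)

theorem hasDerivAt_decayingSolution (l : ℝ) {f : ℝ → ℝ} (hf : Continuous f)
    (hfi : Integrable fun s => exp (-l * s) * f s) (t : ℝ) :
    HasDerivAt (decayingSolution l f) (l * decayingSolution l f t + f t) t := by
  have hexp : HasDerivAt (fun t => exp (l * t)) (exp (l * t) * l) t := by
    simpa using ((hasDerivAt_id t).const_mul l).exp
  have hcancel : exp (l * t) * exp (-l * t) = 1 := by rw [← exp_add]; simp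
  refine (hexp.mul (hasDerivAt_integral_Ioi (by fun_prop) hfi t)).neg.congr_deriv ?_
  simp only [decayingSolution]
  linear_combination f t * hcancel

theorem sq_decayingSolution_le {l : ℝ} (hl : 0 < l) {f : ℝ → ℝ} {t : ℝ}
    (h1 : IntegrableOn (fun s => exp (-l * s) * f s) (Ioi t))
    (h2 : IntegrableOn (fun s => exp (-l * s) * f s ^ 2) (Ioi t)) :
    decayingSolution l f t ^ 2 ≤ exp (l * t) / l * ∫ s in Ioi t, exp (-l * s) * f s ^ 2 := by
  have hcs := sq_integral_mul_le_integral_mul_integral_mul_sq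
    (ae_of_all _ fun s => (exp_pos (-l * s)).le) (exp_neg_integrableOn_Ioi t hl) h1 h2
  rw [integral_exp_mul_Ioi (by linarith) t] at hcs
  have hexp : exp (l * t) * exp (-l * t) = 1 := by rw [← exp_add]; simp
  calc decayingSolution l f t ^ 2
      = exp (l * t) ^ 2 * (∫ s in Ioi t, exp (-l * s) * f s) ^ 2 := by
        simp only [decayingSolution]; ring
    _ ≤ exp (l * t) ^ 2 * (exp (-l * t) / l * ∫ s in Ioi t, exp (-l * s) * f s ^ 2) := by
        rw [neg_div_neg_eq] at hcs
        gcongr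
    _ = (exp (l * t) * exp (-l * t)) * exp (l * t) / l * ∫ s in Ioi t, exp (-l * s) * f s ^ 2 := by
        ring
    _ = exp (l * t) / l * ∫ s in Ioi t, exp (-l * s) * f s ^ 2 := by
        rw [hexp, one_mul]

theorem div_le_exp_mul_sub_div {ε t s : ℝ} (hε0 : 0 < ε) (hε1 : ε ≤ 1) (ht : 1 ≤ t)
    (hts : t ≤ s) : s / t ≤ exp (ε * (s - t)) / ε := by
  calc s / t ≤ 1 + (s - t) := by
        rw [div_le_iff₀ (by linarith)]; nlinarith
    _ ≤ (ε * (s - t) + 1) / ε := by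
        rw [le_div_iff₀ hε0]; nlinarith
    _ ≤ exp (ε * (s - t)) / ε := by
        gcongr; exact add_one_le_exp _

theorem rpow_le_mul_rpow_mul_exp (a : ℝ) {ε t s : ℝ} (hε0 : 0 < ε) (hε1 : ε ≤ 1) (ht : 1 ≤ t)
    (hts : t ≤ s) : t ^ a ≤ ε ^ (-|a|) * s ^ a * exp (ε * |a| * (s - t)) := by
  have ht0 : 0 < t := by linarith
  have hs0 : 0 < s := by linarith
  have hratio : 1 ≤ s / t := (one_le_div ht0).2 hts
  calc t ^ a = s ^ a * (s / t) ^ (-a) := by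
        rw [rpow_neg (by positivity), ← inv_rpow (by positivity), inv_div,
          div_rpow ht0.le hs0.le, mul_div_cancel₀ _ (by positivity)]
    _ ≤ s ^ a * (s / t) ^ |a| :=
        mul_le_mul_of_nonneg_left (rpow_le_rpow_of_exponent_le hratio (neg_le_abs a))
          (by positivity)
    _ ≤ s ^ a * (exp (ε * (s - t)) / ε) ^ |a| :=
        mul_le_mul_of_nonneg_left (rpow_le_rpow (by positivity)
          (div_le_exp_mul_sub_div hε0 hε1 ht hts) (abs_nonneg a)) (by positivity)
    _ = ε ^ (-|a|) * s ^ a * exp (ε * |a| * (s - t)) := by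
        rw [div_rpow (by positivity) hε0.le, ← exp_mul, rpow_neg hε0.le]
        ring_nf

theorem lintegral_Ioo_mul_rpow_mul_exp_le {l₀ : ℝ} (hl₀ : 0 < l₀) (a : ℝ) :
    ∃ K : ℝ, 0 < K ∧ ∀ l, l₀ ≤ l → ∀ s, 1 ≤ s →
      ∫⁻ t in Ioo 1 s, ENNReal.ofReal (l * t ^ a * exp (l * t))
        ≤ ENNReal.ofReal (K * s ^ a * exp (l * s)) := by
  -- `ε |a| ≤ l₀ / 2`, so the factor `exp (ε |a| (s - t))` is absorbed by half of `exp (l (t - s))`.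
  set ε := l₀ / (2 * |a| + l₀)
  have hε0 : 0 < ε := by positivity
  have hε1 : ε ≤ 1 := (div_le_one (by positivity)).2 (by linarith [abs_nonneg a])
  have hεa : 2 * (ε * |a|) ≤ l₀ := by
    rw [div_mul_eq_mul_div, ← mul_div_assoc, div_le_iff₀ (by positivity)]
    nlinarith [abs_nonneg a]
  refine ⟨2 * ε ^ (-|a|), by positivity, fun l hl s hs => ?_⟩
  have hl0 : 0 < l := hl₀.trans_le hl
  set c := ε ^ (-|a|) * s ^ a * exp (l / 2 * s)
  have hc : 0 ≤ c := by positivity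
  have hpointwise : ∀ t ∈ Ioo 1 s, l * t ^ a * exp (l * t) ≤ c * (l * exp (l / 2 * t)) := by
    intro t ht
    have hexp : exp (ε * |a| * (s - t)) * exp (l * t) ≤ exp (l / 2 * s) * exp (l / 2 * t) := by
      rw [← exp_add, ← exp_add, exp_le_exp]
      nlinarith [mul_le_mul_of_nonneg_right (by linarith : ε * |a| ≤ l / 2)
        (by linarith [ht.2] : 0 ≤ s - t)]
    calc l * t ^ a * exp (l * t)
        ≤ l * (ε ^ (-|a|) * s ^ a * exp (ε * |a| * (s - t))) * exp (l * t) := by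
          gcongr
          exact rpow_le_mul_rpow_mul_exp a hε0 hε1 ht.1.le ht.2.le
      _ = l * (ε ^ (-|a|) * s ^ a) * (exp (ε * |a| * (s - t)) * exp (l * t)) := by ring
      _ ≤ l * (ε ^ (-|a|) * s ^ a) * (exp (l / 2 * s) * exp (l / 2 * t)) := by gcongr
      _ = c * (l * exp (l / 2 * t)) := by ring
  have hIic : ∫ t in Iic s, l * exp (l / 2 * t) = 2 * exp (l / 2 * s) := by
    rw [integral_const_mul, integral_exp_mul_Iic (by positivity)]
    field_simp
  calc ∫⁻ t in Ioo 1 s, ENNReal.ofReal (l * t ^ a * exp (l * t))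
      ≤ ∫⁻ t in Ioo 1 s, ENNReal.ofReal c * ENNReal.ofReal (l * exp (l / 2 * t)) :=
        setLIntegral_mono' measurableSet_Ioo fun t ht => by
          rw [← ENNReal.ofReal_mul hc]
          exact ENNReal.ofReal_le_ofReal (hpointwise t ht)
    _ ≤ ∫⁻ t in Iic s, ENNReal.ofReal c * ENNReal.ofReal (l * exp (l / 2 * t)) :=
        lintegral_mono_set fun t ht => ht.2.le
    _ = ENNReal.ofReal c * ENNReal.ofReal (2 * exp (l / 2 * s)) := by
        rw [lintegral_const_mul' _ _ ENNReal.ofReal_ne_top, ← hIic,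
          ofReal_integral_eq_lintegral_ofReal
            ((integrableOn_exp_mul_Iic (by positivity) s).const_mul l)
            (ae_of_all _ fun t => by positivity)]
    _ = ENNReal.ofReal (2 * ε ^ (-|a|) * s ^ a * exp (l * s)) := by
        rw [← ENNReal.ofReal_mul hc]
        congr 1
        rw [mul_mul_mul_comm, ← exp_add]
        ring_nf

theorem lintegral_sq_decayingSolution_mul_rpow_le {l K a : ℝ} (hl : 0 < l) {f : ℝ → ℝ}
    (hf : Measurable f) (h1 : Integrable fun s => exp (-l * s) * f s)
    (h2 : Integrable fun s => exp (-l * s) * f s ^ 2)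
    (hK : ∀ s, 1 ≤ s → ∫⁻ t in Ioo 1 s, ENNReal.ofReal (l * t ^ a * exp (l * t))
        ≤ ENNReal.ofReal (K * s ^ a * exp (l * s))) :
    ∫⁻ t in Ioi 1, ENNReal.ofReal ((l * decayingSolution l f t) ^ 2 * t ^ a)
      ≤ ∫⁻ t in Ioi 1, ENNReal.ofReal (K * (f t ^ 2 * t ^ a)) := by
  set F : ℝ → ℝ → ℝ≥0∞ := fun t s =>
    ENNReal.ofReal (l * t ^ a * exp (l * t)) * ENNReal.ofReal (exp (-l * s) * f s ^ 2)
  have hF : Measurable (uncurry F) := by fun_prop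
  have hpointwise : ∀ t ∈ Ioi (1 : ℝ),
      ENNReal.ofReal ((l * decayingSolution l f t) ^ 2 * t ^ a) ≤ ∫⁻ s in Ioi t, F t s := by
    intro t ht
    have hw : 0 ≤ t ^ a := rpow_nonneg (zero_le_one.trans ht.le) a
    have hsq := sq_decayingSolution_le hl h1.integrableOn h2.integrableOn (t := t)
    calc ENNReal.ofReal ((l * decayingSolution l f t) ^ 2 * t ^ a)
        ≤ ENNReal.ofReal (l * t ^ a * exp (l * t) * ∫ s in Ioi t, exp (-l * s) * f s ^ 2) := by
          refine ENNReal.ofReal_le_ofReal ?_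
          calc (l * decayingSolution l f t) ^ 2 * t ^ a
              = l ^ 2 * decayingSolution l f t ^ 2 * t ^ a := by ring
            _ ≤ l ^ 2 * (exp (l * t) / l * ∫ s in Ioi t, exp (-l * s) * f s ^ 2) * t ^ a := by
                gcongr
            _ = l * t ^ a * exp (l * t) * ∫ s in Ioi t, exp (-l * s) * f s ^ 2 := by
                field_simp
      _ = ∫⁻ s in Ioi t, F t s := by
          rw [ENNReal.ofReal_mul (by positivity), ofReal_integral_eq_lintegral_ofReal h2.integrableOn
            (ae_of_all _ fun s => by positivity), ← lintegral_const_mul' _ _ ENNReal.ofReal_ne_top]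
  have hmass : ∀ s ∈ Ioi (1 : ℝ), ∫⁻ t in Ioo 1 s, F t s
      ≤ ENNReal.ofReal (K * (f s ^ 2 * s ^ a)) := by
    intro s hs
    have hexp : exp (l * s) * exp (-l * s) = 1 := by rw [← exp_add]; simp
    calc ∫⁻ t in Ioo 1 s, F t s
        = (∫⁻ t in Ioo 1 s, ENNReal.ofReal (l * t ^ a * exp (l * t)))
            * ENNReal.ofReal (exp (-l * s) * f s ^ 2) :=
          lintegral_mul_const _ (by fun_prop)
      _ ≤ ENNReal.ofReal (K * s ^ a * exp (l * s)) * ENNReal.ofReal (exp (-l * s) * f s ^ 2) := by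
          gcongr
          exact hK s (le_of_lt hs)
      _ = ENNReal.ofReal (K * (f s ^ 2 * s ^ a)) := by
          rw [← ENNReal.ofReal_mul' (by positivity)]
          congr 1
          linear_combination K * s ^ a * f s ^ 2 * hexp
  calc ∫⁻ t in Ioi 1, ENNReal.ofReal ((l * decayingSolution l f t) ^ 2 * t ^ a)
      ≤ ∫⁻ t in Ioi 1, ∫⁻ s in Ioi t, F t s := setLIntegral_mono' measurableSet_Ioi hpointwise
    _ = ∫⁻ s in Ioi 1, ∫⁻ t in Ioo 1 s, F t s := lintegral_Ioi_lintegral_Ioi_swap hF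
    _ ≤ ∫⁻ s in Ioi 1, ENNReal.ofReal (K * (f s ^ 2 * s ^ a)) :=
        setLIntegral_mono' measurableSet_Ioi hmass

theorem integrableOn_and_integral_sq_decayingSolution_mul_rpow_le {l K a : ℝ} (hl : 0 < l)
    (hK0 : 0 ≤ K) {f : ℝ → ℝ} (hf : Continuous f) (h1 : Integrable fun s => exp (-l * s) * f s)
    (h2 : Integrable fun s => exp (-l * s) * f s ^ 2)
    (hfw : IntegrableOn (fun t => f t ^ 2 * t ^ a) (Ioi 1))
    (hK : ∀ s, 1 ≤ s → ∫⁻ t in Ioo 1 s, ENNReal.ofReal (l * t ^ a * exp (l * t))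
        ≤ ENNReal.ofReal (K * s ^ a * exp (l * s))) :
    IntegrableOn (fun t => (l * decayingSolution l f t) ^ 2 * t ^ a) (Ioi 1) ∧
      ∫ t in Ioi 1, (l * decayingSolution l f t) ^ 2 * t ^ a
        ≤ K * ∫ t in Ioi 1, f t ^ 2 * t ^ a := by
  have hw : ∀ᵐ t ∂(volume.restrict (Ioi (1 : ℝ))), 0 ≤ t ^ a :=
    (ae_restrict_iff' measurableSet_Ioi).2 (ae_of_all _ fun t ht =>
      rpow_nonneg (zero_le_one.trans (le_of_lt ht)) _)
  have hcont : Continuous (decayingSolution l f) :=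
    continuous_iff_continuousAt.2 fun t => (hasDerivAt_decayingSolution l hf h1 t).continuousAt
  rw [← integral_const_mul]
  exact integrable_and_integral_le_of_lintegral_ofReal_le
    (hw.mono fun t ht => mul_nonneg (sq_nonneg _) ht) (by fun_prop)
    (hw.mono fun t ht => mul_nonneg hK0 (mul_nonneg (sq_nonneg _) ht)) (hfw.const_mul K)
    (lintegral_sq_decayingSolution_mul_rpow_le hl hf.measurable h1 h2 hK)

/-- First-order ODE `u' - λ u = f` with `λ ≥ λ₀ > 0`: the solution
`u(t) = -e^{λ t} ∫_t^∞ e^{-λ s} f(s) ds` is differentiable, solves the equation,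
and satisfies the weighted estimates with a constant depending only on `λ₀, γ`. -/
theorem first_order_ode_pos_eigenvalue (l₀ γ : ℝ) (hl₀ : 0 < l₀) :
    ∃ C : ℝ, 0 < C ∧ ∀ l : ℝ, l₀ ≤ l →
      ∀ f : ℝ → ℝ, Continuous f → HasCompactSupport f → tsupport f ⊆ Ioi 1 →
      ∀ u : ℝ → ℝ,
        (∀ t : ℝ, u t = -(Real.exp (l * t) * ∫ s in Ioi t, Real.exp (-l * s) * f s)) →
        (∀ t : ℝ, HasDerivAt u (l * u t + f t) t) ∧
        l ^ 2 * (∫ t in Ioi (1 : ℝ), (u t) ^ 2 * t ^ (2 * γ))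
          ≤ C * ∫ t in Ioi (1 : ℝ), (f t) ^ 2 * t ^ (2 * γ) ∧
        (∫ t in Ioi (1 : ℝ), (deriv u t) ^ 2 * t ^ (2 * γ))
          ≤ C * ∫ t in Ioi (1 : ℝ), (f t) ^ 2 * t ^ (2 * γ) := by
  obtain ⟨K, hK, hkernel⟩ := lintegral_Ioo_mul_rpow_mul_exp_le hl₀ (2 * γ)
  refine ⟨2 * K + 2, by positivity, fun l hl f hf hfs hsupp u hu => ?_⟩
  obtain rfl : u = decayingSolution l f := funext hu
  have h1 := integrable_exp_mul_mul hf hfs (-l)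
  have h2 := integrable_exp_mul_mul (g := fun s => f s ^ 2) (by fun_prop)
    (hfs.comp_left (g := fun x : ℝ => x ^ 2) (by norm_num)) (-l)
  have hderiv := hasDerivAt_decayingSolution l hf h1
  have hfw := (integrable_sq_mul_rpow hf hfs (fun h => absurd (hsupp h) (by norm_num))
    (2 * γ)).integrableOn (s := Ioi 1)
  obtain ⟨huw, hest⟩ := integrableOn_and_integral_sq_decayingSolution_mul_rpow_le
    (hl₀.trans_le hl) hK.le hf h1 h2 hfw (hkernel l hl)
  have hw : ∀ᵐ t ∂(volume.restrict (Ioi (1 : ℝ))), 0 ≤ t ^ (2 * γ) :=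
    (ae_restrict_iff' measurableSet_Ioi).2 (ae_of_all _ fun t ht =>
      rpow_nonneg (zero_le_one.trans (le_of_lt ht)) _)
  have hfw0 : 0 ≤ ∫ t in Ioi 1, f t ^ 2 * t ^ (2 * γ) :=
    integral_nonneg_of_ae (hw.mono fun t ht => mul_nonneg (sq_nonneg _) ht)
  refine ⟨hderiv, ?_, ?_⟩
  · calc l ^ 2 * ∫ t in Ioi 1, decayingSolution l f t ^ 2 * t ^ (2 * γ)
        = ∫ t in Ioi 1, (l * decayingSolution l f t) ^ 2 * t ^ (2 * γ) := by
          rw [← integral_const_mul]; congr 1 with t; ring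
      _ ≤ (2 * K + 2) * ∫ t in Ioi 1, f t ^ 2 * t ^ (2 * γ) := by nlinarith
  · calc ∫ t in Ioi 1, deriv (decayingSolution l f) t ^ 2 * t ^ (2 * γ)
        = ∫ t in Ioi 1, (l * decayingSolution l f t + f t) ^ 2 * t ^ (2 * γ) := by
          simp_rw [(hderiv _).deriv]
      _ ≤ 2 * (∫ t in Ioi 1, (l * decayingSolution l f t) ^ 2 * t ^ (2 * γ))
          + 2 * ∫ t in Ioi 1, f t ^ 2 * t ^ (2 * γ) := integral_add_sq_mul_le hw huw hfw
      _ ≤ (2 * K + 2) * ∫ t in Ioi 1, f t ^ 2 * t ^ (2 * γ) := by nlinarith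
end
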